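/- arXiv:1702.05719 — 5 statements merged into one kernel-verified Lean document; each statement's English description precedes it below -/
import Mathlib

section
/- Let W be a real random variable with m ≤ W ≤ M almost surely and E[W] ≥ w₁, where m ≤ w₂ < w₁ ≤ M. Then (E[W] − w₂)² / Var[W] ≥ (w₁ − w₂)² / ((w₁ − m)(M − w₁)), provided Var[W] > 0. -/
private lemma aux_poly (a b c e : ℝ) (ha : 0 ≤ a) (hb : 0 ≤ b) (hc : 0 ≤ c) (he : 0 ≤ e) :
    b^2*((a+b+c)*e) ≤ (a+b)^2*((b+c)*(a+e)) := by
  nlinarith [mul_nonneg (mul_nonneg ha (sq_nonneg (a+b))) (by linarith : (0:ℝ) ≤ b + c),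
    mul_nonneg (mul_nonneg he ha) (by nlinarith : (0:ℝ) ≤ a*b+a*c+b^2+2*b*c)]

/-- For a bounded random variable `W` (taking value `x i` with
probability `q i`, with `m ≤ W ≤ M` a.s.) with mean at least `w₁`, where
`m ≤ w₂ < w₁ ≤ M`, we have
`(E[W] − w₂)²/Var[W] ≥ (w₁ − w₂)²/((w₁ − m)(M − w₁))`. -/
theorem mean_diff_sq_div_var_lower_bound {n : ℕ} (x q : Fin n → ℝ) (m M w₁ w₂ : ℝ)
    (hq : (∀ i, 0 ≤ q i) ∧ ∑ i, q i = 1)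
    (hbound : ∀ i, q i ≠ 0 → m ≤ x i ∧ x i ≤ M)
    (hm : m ≤ w₂) (hw : w₂ < w₁) (hM : w₁ ≤ M)
    (hmean : w₁ ≤ ∑ i, q i * x i)
    (hvar : 0 < ∑ i, q i * x i ^ 2 - (∑ i, q i * x i) ^ 2) :
    (w₁ - w₂) ^ 2 / ((w₁ - m) * (M - w₁))
      ≤ ((∑ i, q i * x i) - w₂) ^ 2
          / (∑ i, q i * x i ^ 2 - (∑ i, q i * x i) ^ 2) := by
  set μ := ∑ i, q i * x i with hμ
  set S2 := ∑ i, q i * x i ^ 2 with hS2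
  have key : 0 ≤ ∑ i, q i * ((M - x i) * (x i - m)) := by
    apply Finset.sum_nonneg
    intro i _
    by_cases h : q i = 0
    · simp [h]
    · exact mul_nonneg (hq.1 i)
        (mul_nonneg (sub_nonneg.2 (hbound i h).2) (sub_nonneg.2 (hbound i h).1))
  have expand : ∑ i, q i * ((M - x i) * (x i - m))
      = (M+m) * μ - S2 - M*m*(∑ i, q i) := by
    rw [hμ, hS2, Finset.mul_sum, Finset.mul_sum, ← Finset.sum_sub_distrib,
      ← Finset.sum_sub_distrib]
    exact Finset.sum_congr rfl fun i _ => by ring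
  rw [expand, hq.2] at key
  have hBD : S2 - μ^2 ≤ (μ - m) * (M - μ) := by nlinarith
  have hμm : m < μ := by linarith
  have hμM : μ < M := by nlinarith
  have hw1M : w₁ < M := lt_of_le_of_lt hmean hμM
  have hd1 : 0 < (w₁ - m) * (M - w₁) := mul_pos (by linarith) (by linarith)
  rw [div_le_div_iff₀ hd1 hvar]
  have h2 : (w₁-w₂)^2 * ((μ-m)*(M-μ)) ≤ (μ-w₂)^2 * ((w₁-m)*(M-w₁)) := by
    have := aux_poly (μ-w₁) (w₁-w₂) (w₂-m) (M-μ)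
      (by linarith) (by linarith) (by linarith) (by linarith)
    linarith
  nlinarith [sq_nonneg (w₁ - w₂)]
end

section
/- Fix a zero-sum game given by payoff matrix U on finite action sets 𝓐 (for Alice) and 𝓑 (for Bob). For w₁, w₂ with v ≤ w₂ ≤ w₁ ≤ w*, any p in the complement 𝓟ᶜ_U(w₂) (within the simplex) and any q ∈ 𝓟_U(w₁) satisfy d₁(p,q) ≥ (w₁ − w₂)/(M − m), where d₁ is total variation distance, m and M are the minimum and maximum entries of U. -/
open Finset

/-- Theorem `thm:TVw1w2`: if `p` does not secure payoff `w₂`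
(i.e. `p ∈ 𝓟ᶜ_U(w₂)`) and `q` secures payoff `w₁`, with `v ≤ w₂ < w₁`,
then `d₁(p,q) ≥ (w₁ − w₂)/(M − m)`. -/
theorem tv_dist_secure_sets {A B : Type*} [Fintype A] [Fintype B]
    [Nonempty A] [Nonempty B]
    (U : A → B → ℝ) (p q : A → ℝ) (w₁ w₂ m M v : ℝ)
    (hm : m = Finset.univ.inf' Finset.univ_nonempty (fun ij : A × B => U ij.1 ij.2))
    (hM : M = Finset.univ.sup' Finset.univ_nonempty (fun ij : A × B => U ij.1 ij.2))
    (hv : v = Finset.univ.sup' Finset.univ_nonempty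
        (fun i => Finset.univ.inf' Finset.univ_nonempty (fun j => U i j)))
    (hmM : m < M)
    (hp : (∀ i, 0 ≤ p i) ∧ ∑ i, p i = 1)
    (hq : (∀ i, 0 ≤ q i) ∧ ∑ i, q i = 1)
    (hvw : v ≤ w₂) (hw : w₂ < w₁)
    (hpc : ∃ j, ∑ i, p i * U i j < w₂)
    (hqs : ∀ j, w₁ ≤ ∑ i, q i * U i j) :
    (w₁ - w₂) / (M - m) ≤ (1/2) * ∑ i, |p i - q i| := by
  obtain ⟨j, hj⟩ := hpc
  have hmle : ∀ i, m ≤ U i j := fun i => by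
    rw [hm]; exact Finset.inf'_le _ (Finset.mem_univ ((i, j) : A × B))
  have hMle : ∀ i, U i j ≤ M := fun i => by
    rw [hM]; exact Finset.le_sup' (fun ij : A × B => U ij.1 ij.2) (Finset.mem_univ (i, j))
  have h1 : w₁ - w₂ ≤ ∑ i, (q i - p i) * U i j := by
    have := hqs j
    have h2 : ∑ i, (q i - p i) * U i j
        = (∑ i, q i * U i j) - ∑ i, p i * U i j := by
      rw [← Finset.sum_sub_distrib]
      congr 1; ext i; ring
    rw [h2]; linarith
  have h3 : ∑ i, (q i - p i) * U i j
      = ∑ i, (q i - p i) * (U i j - (M + m) / 2) := by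
    rw [← sub_eq_zero, ← Finset.sum_sub_distrib]
    have : ∀ i, (q i - p i) * U i j - (q i - p i) * (U i j - (M + m) / 2)
        = (M + m) / 2 * (q i - p i) := fun i => by ring
    simp_rw [this, ← Finset.mul_sum, Finset.sum_sub_distrib, hq.2, hp.2]
    ring
  have h4 : ∑ i, (q i - p i) * (U i j - (M + m) / 2)
      ≤ ∑ i, |p i - q i| * ((M - m) / 2) := by
    apply Finset.sum_le_sum
    intro i _
    calc (q i - p i) * (U i j - (M + m) / 2)
        ≤ |(q i - p i) * (U i j - (M + m) / 2)| := le_abs_self _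
      _ = |p i - q i| * |U i j - (M + m) / 2| := by
          rw [abs_mul, abs_sub_comm]
      _ ≤ |p i - q i| * ((M - m) / 2) := by
          apply mul_le_mul_of_nonneg_left _ (abs_nonneg _)
          rw [abs_le]
          constructor <;> [have := hmle i; have := hMle i] <;> linarith
  have hMm : (0:ℝ) < M - m := by linarith
  rw [div_le_iff₀ hMm]
  have h5 : w₁ - w₂ ≤ (M - m) / 2 * ∑ i, |p i - q i| := by
    calc w₁ - w₂ ≤ ∑ i, (q i - p i) * U i j := h1
      _ = ∑ i, (q i - p i) * (U i j - (M + m) / 2) := h3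
      _ ≤ ∑ i, |p i - q i| * ((M - m) / 2) := h4
      _ = (M - m) / 2 * ∑ i, |p i - q i| := by
          rw [← Finset.sum_mul]; ring
  linarith
end

section
/- Fix a zero-sum game with payoff matrix U on finite sets 𝓐 × 𝓑, with minimum entry m, maximum entry M, pure-strategy security level v, and value w*. For v ≤ w₂ ≤ w₁ ≤ w*, any p ∈ Δ(𝓐) not securing payoff w₂ and any q ∈ Δ(𝓐) securing payoff w₁ satisfy ∑ᵢ pᵢ²/qᵢ ≥ 1 + (w₁ − w₂)²/((w₁ − m)(M − w₁)), i.e., d₂(p,q) ≥ log(1 + (w₁ − w₂)²/((w₁ − m)(M − w₁))), where d₂(p,q) = log ∑ᵢ pᵢ²/qᵢ is the Rényi divergence of order 2. -/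
open Finset

lemma renyi2_aux_mono (a b c d : ℝ) (ha : 0 ≤ a) (hb : 0 ≤ b) (hc : 0 ≤ c) (hd : 0 ≤ d) :
    b ^ 2 * ((a + b + c) * d) ≤ (b + c) ^ 2 * ((a + b) * (c + d)) := by
  nlinarith [mul_nonneg (mul_nonneg (mul_nonneg ha hb) hb) hc,
    mul_nonneg (mul_nonneg (mul_nonneg hb hb) hb) hc,
    mul_nonneg (mul_nonneg (mul_nonneg ha hb) hc) hc,
    mul_nonneg (mul_nonneg (mul_nonneg ha hb) hc) hd,
    mul_nonneg (mul_nonneg (mul_nonneg hb hb) hc) hc,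
    mul_nonneg (mul_nonneg (mul_nonneg hb hb) hc) hd,
    mul_nonneg (mul_nonneg (mul_nonneg ha hc) hc) hc,
    mul_nonneg (mul_nonneg (mul_nonneg ha hc) hc) hd,
    mul_nonneg (mul_nonneg (mul_nonneg hb hc) hc) hc,
    mul_nonneg (mul_nonneg (mul_nonneg hb hc) hc) hd]

/-- Theorem `thm:mainw1w2`: if `p` does not secure payoff `w₂`
and `q` secures payoff `w₁`, with `v ≤ w₂ < w₁`, `m < w₁ < M`, then
`∑ pᵢ²/qᵢ ≥ 1 + (w₁ − w₂)²/((w₁ − m)(M − w₁))`, i.e. the Rényi divergence of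
order 2 satisfies `d₂(p,q) ≥ log(1 + (w₁ − w₂)²/((w₁ − m)(M − w₁)))`.
(The case `qᵢ = 0, pᵢ > 0`, which gives `+∞`, is excluded by `hsupp`.) -/
theorem renyi2_dist_secure_sets {A B : Type*} [Fintype A] [Fintype B]
    [Nonempty A] [Nonempty B]
    (U : A → B → ℝ) (p q : A → ℝ) (w₁ w₂ m M v : ℝ)
    (hm : m = Finset.univ.inf' Finset.univ_nonempty (fun ij : A × B => U ij.1 ij.2))
    (hM : M = Finset.univ.sup' Finset.univ_nonempty (fun ij : A × B => U ij.1 ij.2))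
    (hv : v = Finset.univ.sup' Finset.univ_nonempty
        (fun i => Finset.univ.inf' Finset.univ_nonempty (fun j => U i j)))
    (hmw : m < w₁) (hwM : w₁ < M)
    (hp : (∀ i, 0 ≤ p i) ∧ ∑ i, p i = 1)
    (hq : (∀ i, 0 ≤ q i) ∧ ∑ i, q i = 1)
    (hsupp : ∀ i, q i = 0 → p i = 0)
    (hvw : v ≤ w₂) (hw : w₂ < w₁)
    (hpc : ∃ j, ∑ i, p i * U i j < w₂)
    (hqs : ∀ j, w₁ ≤ ∑ i, q i * U i j) :
    1 + (w₁ - w₂) ^ 2 / ((w₁ - m) * (M - w₁)) ≤ ∑ i, p i ^ 2 / q i := by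
  obtain ⟨j, hpu⟩ := hpc
  -- bounds on U · j
  have hml : ∀ i, m ≤ U i j := by
    intro i
    rw [hm]
    exact Finset.inf'_le (fun ij : A × B => U ij.1 ij.2) (Finset.mem_univ ((i, j) : A × B))
  have hMl : ∀ i, U i j ≤ M := by
    intro i
    rw [hM]
    exact Finset.le_sup' (fun ij : A × B => U ij.1 ij.2) (Finset.mem_univ ((i, j) : A × B))
  -- m ≤ w₂
  have hmv : m ≤ v := by
    obtain ⟨i₀⟩ := ‹Nonempty A›
    rw [hv]
    refine le_trans ?_ (Finset.le_sup'
      (fun i => Finset.univ.inf' Finset.univ_nonempty (fun j => U i j)) (Finset.mem_univ i₀))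
    apply Finset.le_inf'
    intro b _
    rw [hm]
    exact Finset.inf'_le (fun ij : A × B => U ij.1 ij.2) (Finset.mem_univ ((i₀, b) : A × B))
  have hmw₂ : m ≤ w₂ := le_trans hmv hvw
  obtain ⟨μ, hμ⟩ : ∃ μ : ℝ, μ = ∑ i, q i * U i j := ⟨_, rfl⟩
  have hμ1 : w₁ ≤ μ := hμ ▸ hqs j
  obtain ⟨S, hS⟩ : ∃ S : ℝ, S = ∑ i, (p i - q i) ^ 2 / q i := ⟨_, rfl⟩
  have hSnn : 0 ≤ S := by
    rw [hS]
    exact Finset.sum_nonneg fun i _ => div_nonneg (sq_nonneg _) (hq.1 i)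
  -- ∑ p²/q = S + 1
  have hsum : ∑ i, p i ^ 2 / q i = S + 1 := by
    have hpt : ∀ i, p i ^ 2 / q i = (p i - q i) ^ 2 / q i + (2 * p i - q i) := by
      intro i
      by_cases hqi : q i = 0
      · simp [hqi, hsupp i hqi]
      · field_simp
        ring
    rw [Finset.sum_congr rfl fun i _ => hpt i, Finset.sum_add_distrib,
      Finset.sum_sub_distrib, ← Finset.mul_sum, hp.2, hq.2, hS]
    ring
  -- Cauchy–Schwarz
  have hCS : (∑ i, (p i - q i) * (U i j - μ)) ^ 2 ≤ S * (∑ i, q i * (U i j - μ) ^ 2) := by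
    have key := Finset.sum_mul_sq_le_sq_mul_sq Finset.univ
      (fun i => (p i - q i) / Real.sqrt (q i)) (fun i => Real.sqrt (q i) * (U i j - μ))
    have e1 : ∀ i, (p i - q i) / Real.sqrt (q i) * (Real.sqrt (q i) * (U i j - μ))
        = (p i - q i) * (U i j - μ) := by
      intro i
      by_cases hqi : q i = 0
      · simp [hqi, hsupp i hqi]
      · have hne : Real.sqrt (q i) ≠ 0 :=
          Real.sqrt_ne_zero'.mpr (lt_of_le_of_ne (hq.1 i) (Ne.symm hqi))
        field_simp
    have e2 : ∀ i, ((p i - q i) / Real.sqrt (q i)) ^ 2 = (p i - q i) ^ 2 / q i := by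
      intro i
      rw [div_pow, Real.sq_sqrt (hq.1 i)]
    have e3 : ∀ i, (Real.sqrt (q i) * (U i j - μ)) ^ 2 = q i * (U i j - μ) ^ 2 := by
      intro i
      rw [mul_pow, Real.sq_sqrt (hq.1 i)]
    rw [Finset.sum_congr rfl fun i _ => e1 i, Finset.sum_congr rfl fun i _ => e2 i,
      Finset.sum_congr rfl fun i _ => e3 i, ← hS] at key
    exact key
  -- the inner product
  have eip : ∑ i, (p i - q i) * (U i j - μ) = (∑ i, p i * U i j) - μ := by
    have h1 : ∑ i, (p i - q i) * (U i j - μ)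
        = (∑ i, p i * U i j) - μ * (∑ i, p i) - (∑ i, q i * U i j) + μ * (∑ i, q i) := by
      rw [Finset.mul_sum, Finset.mul_sum, ← Finset.sum_sub_distrib, ← Finset.sum_sub_distrib,
        ← Finset.sum_add_distrib]
      apply Finset.sum_congr rfl
      intros
      ring
    rw [h1, hp.2, hq.2, ← hμ]
    ring
  -- variance bound
  have hV : ∑ i, q i * (U i j - μ) ^ 2 ≤ (μ - m) * (M - μ) := by
    have hpt : ∀ i, q i * (U i j - μ) ^ 2
        ≤ q i * ((m + M) * U i j - m * M - 2 * μ * U i j + μ ^ 2) := by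
      intro i
      apply mul_le_mul_of_nonneg_left _ (hq.1 i)
      nlinarith [hml i, hMl i]
    calc ∑ i, q i * (U i j - μ) ^ 2
        ≤ ∑ i, q i * ((m + M) * U i j - m * M - 2 * μ * U i j + μ ^ 2) :=
          Finset.sum_le_sum fun i _ => hpt i
      _ = (m + M) * (∑ i, q i * U i j) - m * M * (∑ i, q i)
          - 2 * μ * (∑ i, q i * U i j) + μ ^ 2 * (∑ i, q i) := by
          rw [Finset.mul_sum, Finset.mul_sum, Finset.mul_sum, Finset.mul_sum,
            ← Finset.sum_sub_distrib, ← Finset.sum_sub_distrib, ← Finset.sum_add_distrib]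
          apply Finset.sum_congr rfl
          intros
          ring
      _ = (μ - m) * (M - μ) := by rw [← hμ, hq.2]; ring
  -- key inequality
  have hlb : (μ - w₂) ^ 2 ≤ ((∑ i, p i * U i j) - μ) ^ 2 := by
    have h1 : 0 ≤ μ - w₂ := by linarith
    have h2 : μ - w₂ ≤ μ - (∑ i, p i * U i j) := by linarith
    calc (μ - w₂) ^ 2 ≤ (μ - (∑ i, p i * U i j)) ^ 2 := by nlinarith
      _ = ((∑ i, p i * U i j) - μ) ^ 2 := by ring
  have key : (μ - w₂) ^ 2 ≤ S * ((μ - m) * (M - μ)) := by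
    calc (μ - w₂) ^ 2 ≤ ((∑ i, p i * U i j) - μ) ^ 2 := hlb
      _ ≤ S * (∑ i, q i * (U i j - μ) ^ 2) := by rw [← eip]; exact hCS
      _ ≤ S * ((μ - m) * (M - μ)) := mul_le_mul_of_nonneg_left hV hSnn
  -- μ ≤ M
  have hμM : μ ≤ M := by
    rw [hμ]
    calc ∑ i, q i * U i j ≤ ∑ i, q i * M :=
          Finset.sum_le_sum fun i _ => mul_le_mul_of_nonneg_left (hMl i) (hq.1 i)
      _ = M := by rw [← Finset.sum_mul, hq.2, one_mul]
  -- monotonicity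
  have hmono : (w₁ - w₂) ^ 2 * ((μ - m) * (M - μ)) ≤ (μ - w₂) ^ 2 * ((w₁ - m) * (M - w₁)) := by
    have haux := renyi2_aux_mono (w₂ - m) (w₁ - w₂) (μ - w₁) (M - μ)
      (by linarith) (by linarith) (by linarith) (by linarith)
    calc (w₁ - w₂) ^ 2 * ((μ - m) * (M - μ))
        = (w₁ - w₂) ^ 2 * (((w₂ - m) + (w₁ - w₂) + (μ - w₁)) * (M - μ)) := by ring
      _ ≤ ((w₁ - w₂) + (μ - w₁)) ^ 2 * (((w₂ - m) + (w₁ - w₂)) * ((μ - w₁) + (M - μ))) := haux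
      _ = (μ - w₂) ^ 2 * ((w₁ - m) * (M - w₁)) := by ring
  -- positivity of (μ - m)(M - μ)
  have hPpos : 0 < (μ - m) * (M - μ) := by
    rcases lt_or_ge μ M with h | h
    · exact mul_pos (by linarith) (by linarith)
    · exfalso
      have hMe : μ = M := le_antisymm hμM h
      have h1 : S * ((μ - m) * (M - μ)) = 0 := by rw [hMe]; ring
      nlinarith [key]
  have hfin : (w₁ - w₂) ^ 2 ≤ S * ((w₁ - m) * (M - w₁)) := by
    have h2 : (w₁ - w₂) ^ 2 * ((μ - m) * (M - μ))
        ≤ (S * ((w₁ - m) * (M - w₁))) * ((μ - m) * (M - μ)) := by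
      calc (w₁ - w₂) ^ 2 * ((μ - m) * (M - μ))
          ≤ (μ - w₂) ^ 2 * ((w₁ - m) * (M - w₁)) := hmono
        _ ≤ (S * ((μ - m) * (M - μ))) * ((w₁ - m) * (M - w₁)) := by
            exact mul_le_mul_of_nonneg_right key
              (mul_nonneg (by linarith) (by linarith))
        _ = (S * ((w₁ - m) * (M - w₁))) * ((μ - m) * (M - μ)) := by ring
    exact le_of_mul_le_mul_right h2 hPpos
  have hQ : 0 < (w₁ - m) * (M - w₁) := mul_pos (by linarith) (by linarith)
  have hdiv : (w₁ - w₂) ^ 2 / ((w₁ - m) * (M - w₁)) ≤ S := (div_le_iff₀ hQ).mpr hfin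
  rw [hsum]
  linarith
end

section
/- For any two zero-sum games with payoff matrices U₁ (on 𝓐₁×𝓑₁) and U₂ (on 𝓐₂×𝓑₂), define the direct-sum game U₁⊕U₂ on (𝓐₁×𝓐₂)×(𝓑₁×𝓑₂) with payoff u¹_{a₁,b₁} + u²_{a₂,b₂}. Then the min-entropy function satisfies F_{U⊕U}(w) = F_U(w/2) for every real w, where F_U(w) is the minimum Shannon entropy over all mixed strategies of Alice that secure payoff w in game U (and +∞ if no such strategy exists). -/
open scoped ENNReal

/-- `p` is a probability mass function on the finite type `α`. -/
def IsPmf {α : Type*} [Fintype α] (p : α → ℝ) : Prop :=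
  (∀ a, 0 ≤ p a) ∧ ∑ a, p a = 1

/-- `p` secures payoff `w` for the maximizer in the zero-sum game `U`. -/
def Secures {A B : Type*} [Fintype A] [Fintype B]
    (U : A → B → ℝ) (p : A → ℝ) (w : ℝ) : Prop :=
  ∀ j, w ≤ ∑ i, p i * U i j

/-- Shannon entropy (base 2) of `p`. -/
noncomputable def shEntropy {α : Type*} [Fintype α] (p : α → ℝ) : ℝ :=
  -∑ a, p a * Real.logb 2 (p a)

/-- The min-entropy function `F_U(w)`: the infimum of the entropies of the
mixed strategies securing payoff `w` (`+∞ = ⊤` if no such strategy exists). -/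
noncomputable def minEntropyFn {A B : Type*} [Fintype A] [Fintype B]
    (U : A → B → ℝ) (w : ℝ) : ℝ≥0∞ :=
  sInf {h | ∃ p, IsPmf p ∧ Secures U p w ∧ h = ENNReal.ofReal (shEntropy p)}

/-- The direct-sum game `U₁ ⊕ U₂`. -/
def directSum {A₁ B₁ A₂ B₂ : Type*}
    (U₁ : A₁ → B₁ → ℝ) (U₂ : A₂ → B₂ → ℝ) :
    A₁ × A₂ → B₁ × B₂ → ℝ :=
  fun a b => U₁ a.1 b.1 + U₂ a.2 b.2

/-- Entropy of the first marginal is at most the entropy of the joint. -/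
lemma shEntropy_marg1 {A B : Type*} [Fintype A] [Fintype B]
    (q : A × B → ℝ) (hq : ∀ x, 0 ≤ q x) :
    shEntropy (fun a => ∑ b, q (a, b)) ≤ shEntropy q := by
  unfold shEntropy
  rw [neg_le_neg_iff, Fintype.sum_prod_type]
  apply Finset.sum_le_sum
  intro a _
  rw [Finset.sum_mul]
  apply Finset.sum_le_sum
  intro b _
  rcases eq_or_lt_of_le (hq (a, b)) with h | h
  · simp [← h]
  · apply mul_le_mul_of_nonneg_left _ (hq (a, b))
    apply Real.logb_le_logb_of_le (by norm_num : (1:ℝ) < 2) h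
    exact Finset.single_le_sum (fun b' _ => hq (a, b')) (Finset.mem_univ b)

/-- Entropy of the second marginal is at most the entropy of the joint. -/
lemma shEntropy_marg2 {A B : Type*} [Fintype A] [Fintype B]
    (q : A × B → ℝ) (hq : ∀ x, 0 ≤ q x) :
    shEntropy (fun b => ∑ a, q (a, b)) ≤ shEntropy q := by
  have h := shEntropy_marg1 (fun x : B × A => q (x.2, x.1)) (fun x => hq _)
  have he : shEntropy (fun x : B × A => q (x.2, x.1)) = shEntropy q := by
    unfold shEntropy
    rw [Fintype.sum_prod_type, Fintype.sum_prod_type, Finset.sum_comm]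
  rw [he] at h
  exact h

lemma sum_directSum_eq {A B : Type*} [Fintype A] [Fintype B]
    (U : A → B → ℝ) (q : A × A → ℝ) (j₁ j₂ : B) :
    ∑ i : A × A, q i * directSum U U i (j₁, j₂)
      = ∑ a, (∑ b, q (a, b)) * U a j₁ + ∑ a, (∑ b, q (b, a)) * U a j₂ := by
  simp only [directSum, mul_add]
  rw [Finset.sum_add_distrib, Fintype.sum_prod_type, Fintype.sum_prod_type]
  congr 1
  · apply Finset.sum_congr rfl
    intro a _
    rw [Finset.sum_mul]
  · rw [Finset.sum_comm]
    apply Finset.sum_congr rfl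
    intro a _
    rw [Finset.sum_mul]

/-- Theorem `T:direct_sum`: `F_{U⊕U}(w) = F_U(w/2)`. -/
theorem minEntropyFn_directSum {A B : Type*} [Fintype A] [Fintype B]
    (U : A → B → ℝ) (w : ℝ) :
    minEntropyFn (directSum U U) w = minEntropyFn U (w / 2) := by
  classical
  apply le_antisymm
  · -- given p securing w/2, the diagonal distribution secures w with same entropy
    apply le_sInf
    rintro h ⟨p, ⟨hp0, hp1⟩, hps, rfl⟩
    apply sInf_le
    refine ⟨fun x : A × A => if x.1 = x.2 then p x.1 else 0, ⟨?_, ?_⟩, ?_, ?_⟩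
    · intro x; dsimp only; split_ifs with hx
      · exact hp0 _
      · exact le_refl 0
    · rw [Fintype.sum_prod_type]
      simp only [Finset.sum_ite_eq, Finset.mem_univ, if_true]
      exact hp1
    · intro j
      rcases j with ⟨j₁, j₂⟩
      rw [show (∑ i : A × A, (if i.1 = i.2 then p i.1 else 0) * directSum U U i (j₁, j₂))
          = ∑ a, p a * (U a j₁ + U a j₂) from ?_]
      · simp_rw [mul_add, Finset.sum_add_distrib]
        have h1 := hps j₁
        have h2 := hps j₂
        linarith
      · rw [Fintype.sum_prod_type]
        apply Finset.sum_congr rfl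
        intro a _
        rw [show (∑ b, (if a = b then p a else 0) * directSum U U (a, b) (j₁, j₂))
            = ∑ b, (if a = b then p a * (U a j₁ + U a j₂) else 0) from ?_]
        · simp [Finset.sum_ite_eq]
        · apply Finset.sum_congr rfl
          intro b _
          split_ifs with hb
          · subst hb; rfl
          · simp
    · congr 1
      unfold shEntropy
      congr 1
      rw [Fintype.sum_prod_type]
      apply Finset.sum_congr rfl
      intro a _
      rw [show (∑ b, (if a = b then p a else 0) * Real.logb 2 (if a = b then p a else 0))
          = ∑ b, (if a = b then p a * Real.logb 2 (p a) else 0) from ?_]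
      · simp [Finset.sum_ite_eq]
      · apply Finset.sum_congr rfl
        intro b _
        split_ifs with hb
        · rfl
        · simp
  · -- given q securing w, one of its marginals secures w/2 with smaller entropy
    apply le_sInf
    rintro h ⟨q, ⟨hq0, hq1⟩, hqs, rfl⟩
    set q₁ : A → ℝ := fun a => ∑ b, q (a, b) with hq₁def
    set q₂ : A → ℝ := fun a => ∑ b, q (b, a) with hq₂def
    have key : ∀ j₁ j₂, w ≤ ∑ a, q₁ a * U a j₁ + ∑ a, q₂ a * U a j₂ := by
      intro j₁ j₂
      have := hqs (j₁, j₂)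
      rwa [sum_directSum_eq] at this
    by_cases hc : ∀ j, w / 2 ≤ ∑ a, q₁ a * U a j
    · apply sInf_le_of_le (b := ENNReal.ofReal (shEntropy q₁))
      · exact ⟨q₁, ⟨fun a => Finset.sum_nonneg fun b _ => hq0 _, by
          rw [hq₁def, ← Fintype.sum_prod_type]; exact hq1⟩, hc, rfl⟩
      · exact ENNReal.ofReal_le_ofReal (shEntropy_marg1 q hq0)
    · push_neg at hc
      obtain ⟨j₁, hj₁⟩ := hc
      have hc2 : ∀ j, w / 2 ≤ ∑ a, q₂ a * U a j := by
        intro j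
        have := key j₁ j
        linarith
      apply sInf_le_of_le (b := ENNReal.ofReal (shEntropy q₂))
      · exact ⟨q₂, ⟨fun a => Finset.sum_nonneg fun b _ => hq0 _, by
          rw [hq₂def, Finset.sum_comm, ← Fintype.sum_prod_type]; exact hq1⟩, hc2, rfl⟩
      · exact ENNReal.ofReal_le_ofReal (shEntropy_marg2 q hq0)
end

section
/- Fix a zero-sum game U with pure-strategy security level v, value w*, and a Nash (maximin-optimal) strategy p* of Alice with entropy h*. For v ≤ w ≤ w*, letting α = (w* − w)/(w* − v) (with α = 0 if v = w*) and i* a pure strategy achieving v, the mixture p = α·e_{i*} + (1−α)·p* secures payoff w and satisfies H(p) ≤ (1−α)·h* + h(α), where h(α) = −α log α − (1−α) log(1−α). Hence F_U(w) ≤ min{h*, ((w−v)/(w*−v))·h* + h((w−v)/(w*−v))}. -/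
open Finset
open scoped ENNReal

/-- Binary entropy function `h(α)` (base 2). -/
noncomputable def binEnt (x : ℝ) : ℝ :=
  -(x * Real.logb 2 x) - (1 - x) * Real.logb 2 (1 - x)

private lemma mul_logb_add_le (a b : ℝ) (ha : 0 ≤ a) (hb : 0 ≤ b) :
    a * Real.logb 2 a + b * Real.logb 2 b ≤ (a + b) * Real.logb 2 (a + b) := by
  have h1 : a * Real.logb 2 a ≤ a * Real.logb 2 (a + b) := by
    rcases eq_or_lt_of_le ha with h | h
    · simp [← h]
    · exact mul_le_mul_of_nonneg_left
        (Real.logb_le_logb_of_le (by norm_num) h (by linarith)) ha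
  have h2 : b * Real.logb 2 b ≤ b * Real.logb 2 (a + b) := by
    rcases eq_or_lt_of_le hb with h | h
    · simp [← h]
    · exact mul_le_mul_of_nonneg_left
        (Real.logb_le_logb_of_le (by norm_num) h (by linarith)) hb
  calc a * Real.logb 2 a + b * Real.logb 2 b
      ≤ a * Real.logb 2 (a + b) + b * Real.logb 2 (a + b) := add_le_add h1 h2
    _ = (a + b) * Real.logb 2 (a + b) := by ring

private lemma mul_logb_mul (c x : ℝ) :
    (c * x) * Real.logb 2 (c * x) = (c * x) * Real.logb 2 c + c * (x * Real.logb 2 x) := by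
  rcases eq_or_ne c 0 with rfl | hc
  · simp
  rcases eq_or_ne x 0 with rfl | hx
  · simp
  rw [Real.logb_mul hc hx]; ring

private lemma entropy_mix {A : Type*} [Fintype A] [DecidableEq A]
    (α : ℝ) (hα0 : 0 ≤ α) (hα1 : α ≤ 1) (q : A → ℝ) (hq : IsPmf q) (istar : A) :
    shEntropy (fun i => α * (if i = istar then 1 else 0) + (1 - α) * q i)
      ≤ (1 - α) * shEntropy q + binEnt α := by
  unfold shEntropy binEnt
  have key : ∀ i : A,
      (α * (if i = istar then 1 else 0)) * Real.logb 2 (α * (if i = istar then 1 else 0))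
        + ((1 - α) * q i) * Real.logb 2 ((1 - α) * q i)
      ≤ (α * (if i = istar then 1 else 0) + (1 - α) * q i) *
          Real.logb 2 (α * (if i = istar then 1 else 0) + (1 - α) * q i) := by
    intro i
    apply mul_logb_add_le
    · positivity
    · exact mul_nonneg (by linarith) (hq.1 i)
  have hsum : ∑ i, ((α * (if i = istar then 1 else 0)) * Real.logb 2 (α * (if i = istar then 1 else 0))
        + ((1 - α) * q i) * Real.logb 2 ((1 - α) * q i))
      ≤ ∑ i, (α * (if i = istar then 1 else 0) + (1 - α) * q i) *
          Real.logb 2 (α * (if i = istar then 1 else 0) + (1 - α) * q i) :=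
    Finset.sum_le_sum fun i _ => key i
  have e1 : ∑ i, (α * (if i = istar then 1 else 0)) * Real.logb 2 (α * (if i = istar then 1 else 0))
      = α * Real.logb 2 α := by
    rw [Finset.sum_eq_single istar]
    · simp
    · intro i _ hi; simp [hi]
    · simp
  have e2 : ∑ i, ((1 - α) * q i) * Real.logb 2 ((1 - α) * q i)
      = (1 - α) * Real.logb 2 (1 - α) + (1 - α) * ∑ i, q i * Real.logb 2 (q i) := by
    have : ∀ i : A, ((1 - α) * q i) * Real.logb 2 ((1 - α) * q i)
        = ((1 - α) * q i) * Real.logb 2 (1 - α) + (1 - α) * (q i * Real.logb 2 (q i)) :=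
      fun i => mul_logb_mul (1 - α) (q i)
    rw [Finset.sum_congr rfl fun i _ => this i, Finset.sum_add_distrib,
      ← Finset.mul_sum, ← Finset.sum_mul, ← Finset.mul_sum, hq.2]
    ring
  rw [Finset.sum_add_distrib, e1, e2] at hsum
  linarith

private lemma binEnt_symm (x : ℝ) : binEnt (1 - x) = binEnt x := by
  unfold binEnt
  have h : 1 - (1 - x) = x := by ring
  rw [h]; ring

/-- bound `Q_U^{(1)}` of Theorem `T:bounds`: mixing the pure
strategy `i*` achieving `v` (weight `α = (w* − w)/(w* − v)`) with a Nash
strategy `p*` of entropy `h*` secures payoff `w` and has entropy at most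
`(1 − α)h* + h(α)`; hence
`F_U(w) ≤ min{h*, ((w − v)/(w* − v))h* + h((w − v)/(w* − v))}`. -/
theorem minEntropy_upper_bound_Q1 {A B : Type*} [Fintype A] [Fintype B]
    [Nonempty A] [Nonempty B] [DecidableEq A]
    (U : A → B → ℝ) (pstar : A → ℝ) (istar : A) (v wstar w hstar : ℝ)
    (hv : v = Finset.univ.sup' Finset.univ_nonempty
        (fun i => Finset.univ.inf' Finset.univ_nonempty (fun j => U i j)))
    (histar : ∀ j, v ≤ U istar j)
    (hpstar : IsPmf pstar) (hnash : Secures U pstar wstar)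
    (hwstar : ∀ p : A → ℝ, IsPmf p →
      Finset.univ.inf' Finset.univ_nonempty (fun j => ∑ i, p i * U i j) ≤ wstar)
    (hhstar : hstar = shEntropy pstar)
    (hvw : v < wstar) (hw1 : v ≤ w) (hw2 : w ≤ wstar) :
    Secures U (fun i => (wstar - w) / (wstar - v) * (if i = istar then 1 else 0)
        + (1 - (wstar - w) / (wstar - v)) * pstar i) w
    ∧ shEntropy (fun i => (wstar - w) / (wstar - v) * (if i = istar then 1 else 0)
        + (1 - (wstar - w) / (wstar - v)) * pstar i)
        ≤ (1 - (wstar - w) / (wstar - v)) * hstar + binEnt ((wstar - w) / (wstar - v))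
    ∧ minEntropyFn U w
        ≤ ENNReal.ofReal (min hstar
            ((w - v) / (wstar - v) * hstar + binEnt ((w - v) / (wstar - v)))) := by
  set α : ℝ := (wstar - w) / (wstar - v) with hαdef
  have hden : (0:ℝ) < wstar - v := by linarith
  have hα0 : 0 ≤ α := div_nonneg (by linarith) (le_of_lt hden)
  have hα1 : α ≤ 1 := by
    rw [hαdef, div_le_one hden]; linarith
  have hβ : 1 - α = (w - v) / (wstar - v) := by
    rw [hαdef]; field_simp; ring
  have hαmul : α * (wstar - v) = wstar - w := div_mul_cancel₀ _ (ne_of_gt hden)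
  -- part 1: secures
  have hsec : Secures U (fun i => α * (if i = istar then 1 else 0)
      + (1 - α) * pstar i) w := by
    intro j
    have hsplit : ∑ i, (α * (if i = istar then 1 else 0) + (1 - α) * pstar i) * U i j
        = α * U istar j + (1 - α) * ∑ i, pstar i * U i j := by
      have : ∀ i : A, (α * (if i = istar then 1 else 0) + (1 - α) * pstar i) * U i j
          = α * ((if i = istar then 1 else 0) * U i j) + (1 - α) * (pstar i * U i j) := by
        intro i; ring
      rw [Finset.sum_congr rfl fun i _ => this i, Finset.sum_add_distrib,
        ← Finset.mul_sum, ← Finset.mul_sum]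
      congr 1
      congr 1
      rw [Finset.sum_eq_single istar]
      · simp
      · intro i _ hi; simp [hi]
      · simp
    rw [hsplit]
    have h1 : α * v ≤ α * U istar j := mul_le_mul_of_nonneg_left (histar j) hα0
    have h2 : (1 - α) * wstar ≤ (1 - α) * ∑ i, pstar i * U i j :=
      mul_le_mul_of_nonneg_left (hnash j) (by linarith)
    nlinarith [hαmul]
  -- part 2: entropy bound
  have hent : shEntropy (fun i => α * (if i = istar then 1 else 0) + (1 - α) * pstar i)
      ≤ (1 - α) * hstar + binEnt α := by
    rw [hhstar]
    exact entropy_mix α hα0 hα1 pstar hpstar istar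
  -- the mixture is a pmf
  have hpmf : IsPmf (fun i => α * (if i = istar then 1 else 0) + (1 - α) * pstar i) := by
    constructor
    · intro i
      dsimp only
      have := hpstar.1 i
      have h1 : (0:ℝ) ≤ α * (if i = istar then 1 else 0) := by positivity
      have h2 : (0:ℝ) ≤ (1 - α) * pstar i := mul_nonneg (by linarith) this
      linarith
    · rw [Finset.sum_add_distrib, ← Finset.mul_sum, ← Finset.mul_sum, hpstar.2]
      rw [Finset.sum_ite_eq' Finset.univ istar (fun _ => (1:ℝ))]
      simp
  -- part 3
  have hmin : minEntropyFn U w ≤ ENNReal.ofReal (min hstar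
      ((w - v) / (wstar - v) * hstar + binEnt ((w - v) / (wstar - v)))) := by
    unfold minEntropyFn
    rcases min_cases hstar ((w - v) / (wstar - v) * hstar + binEnt ((w - v) / (wstar - v)))
      with ⟨hmeq, _⟩ | ⟨hmeq, _⟩
    · rw [hmeq]
      apply sInf_le
      refine ⟨pstar, hpstar, ?_, by rw [hhstar]⟩
      intro j
      exact le_trans hw2 (hnash j)
    · rw [hmeq]
      refine le_trans
        (sInf_le ⟨fun i => α * (if i = istar then 1 else 0) + (1 - α) * pstar i,
          hpmf, hsec, rfl⟩)
        (ENNReal.ofReal_le_ofReal ?_)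
      have : (w - v) / (wstar - v) * hstar + binEnt ((w - v) / (wstar - v))
          = (1 - α) * hstar + binEnt α := by
        rw [← hβ, ← binEnt_symm α, hβ]
      rw [this]
      exact hent
  exact ⟨hsec, hent, hmin⟩
end
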